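/- arXiv:1205.3990 — 6 statements merged into one kernel-verified Lean document; each statement's English description precedes it below -/
import Mathlib

section
/- Let G(p) be a bar framework on n ≥ r+2 vertices in general position in R^r. If G is not (r+1)-vertex connected, then G(p) is not globally rigid; that is, there exists a framework G(q) in R^r that is equivalent to G(p) but not congruent to G(p). -/
open Matrix
open scoped Classical

noncomputable section

/-- The configuration `p` affinely spans `ℝ^r`. -/
def AffinelySpans {n r : ℕ} (p : Fin n → EuclideanSpace ℝ (Fin r)) : Prop :=
  affineSpan ℝ (Set.range p) = ⊤

/-- The configuration `p` is in general position in `ℝ^r`: every `r+1` of the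
points are affinely independent. -/
def InGeneralPosition {n r : ℕ} (p : Fin n → EuclideanSpace ℝ (Fin r)) : Prop :=
  ∀ s : Finset (Fin n), s.card = r + 1 →
    AffineIndependent ℝ (fun i : s => p (i : Fin n))

/-- Frameworks `G(p)` and `G(q)` are equivalent: corresponding edges have equal lengths. -/
def FrameworksEquivalent {n r s : ℕ} (G : SimpleGraph (Fin n))
    (p : Fin n → EuclideanSpace ℝ (Fin r)) (q : Fin n → EuclideanSpace ℝ (Fin s)) : Prop :=
  ∀ i j : Fin n, G.Adj i j → ‖q i - q j‖ = ‖p i - p j‖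

/-- Frameworks `G(p)` and `G(q)` are congruent: all pairwise distances agree. -/
def FrameworksCongruent {n r s : ℕ}
    (p : Fin n → EuclideanSpace ℝ (Fin r)) (q : Fin n → EuclideanSpace ℝ (Fin s)) : Prop :=
  ∀ i j : Fin n, ‖q i - q j‖ = ‖p i - p j‖

/-- `G(p)` is universally rigid. -/
def UniversallyRigid {n r : ℕ} (G : SimpleGraph (Fin n))
    (p : Fin n → EuclideanSpace ℝ (Fin r)) : Prop :=
  ∀ (s : ℕ) (q : Fin n → EuclideanSpace ℝ (Fin s)),
    FrameworksEquivalent G p q → FrameworksCongruent p q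

/-- `G(p)` is globally rigid. -/
def GloballyRigid {n r : ℕ} (G : SimpleGraph (Fin n))
    (p : Fin n → EuclideanSpace ℝ (Fin r)) : Prop :=
  ∀ q : Fin n → EuclideanSpace ℝ (Fin r),
    FrameworksEquivalent G p q → FrameworksCongruent p q

/-- `ω` is an equilibrium stress of `G(p)`. -/
def IsEquilibriumStress {n r : ℕ} (G : SimpleGraph (Fin n))
    (p : Fin n → EuclideanSpace ℝ (Fin r)) (ω : Fin n → Fin n → ℝ) : Prop :=
  (∀ i j, ω i j = ω j i) ∧
  ∀ i : Fin n, ∑ j ∈ Finset.univ.filter (fun j => G.Adj i j), ω i j • (p i - p j) = 0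

/-- `S` is the stress matrix of `G(p)` associated to some equilibrium stress `ω`. -/
def IsStressMatrix {n r : ℕ} (G : SimpleGraph (Fin n))
    (p : Fin n → EuclideanSpace ℝ (Fin r)) (S : Matrix (Fin n) (Fin n) ℝ) : Prop :=
  ∃ ω : Fin n → Fin n → ℝ, IsEquilibriumStress G p ω ∧
    (∀ i j : Fin n, G.Adj i j → S i j = - ω i j) ∧
    (∀ i j : Fin n, i ≠ j → ¬ G.Adj i j → S i j = 0) ∧
    (∀ i : Fin n, S i i = ∑ j ∈ Finset.univ.filter (fun j => G.Adj i j), ω i j)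

/-- `G` is `k`-vertex connected: either `G` is the complete graph on `k+1` vertices, or
`n ≥ k+2` and the deletion of any `k-1` vertices leaves `G` connected. -/
def IsKVertexConnected {n : ℕ} (k : ℕ) (G : SimpleGraph (Fin n)) : Prop :=
  (n = k + 1 ∧ G = ⊤) ∨
  (k + 2 ≤ n ∧ ∀ X : Finset (Fin n), X.card = k - 1 →
    (G.induce ((X : Set (Fin n))ᶜ)).Connected)

/-- `G` is chordal: every cycle of length at least 4 has a chord, i.e. an edge of `G`
joining two vertices of the cycle which is not an edge of the cycle. -/
def IsChordal {V : Type*} (G : SimpleGraph V) : Prop :=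
  ∀ (v : V) (c : G.Walk v v), c.IsCycle → 4 ≤ c.length →
    ∃ u w : V, u ∈ c.support ∧ w ∈ c.support ∧ G.Adj u w ∧ s(u, w) ∉ c.edges

/-- The natural ordering `1, 2, ..., n` (i.e. the order on `Fin n`) is a perfect
elimination ordering of `G`: the higher-indexed neighbours of each vertex form a clique. -/
def IsNatPEO {n : ℕ} (G : SimpleGraph (Fin n)) : Prop :=
  ∀ i j k : Fin n, i < j → i < k → j ≠ k → G.Adj i j → G.Adj i k → G.Adj j k

/-- The extended configuration matrix `𝒫` of `G(p)`: its `j`-th column is `(pʲ ; 1)`. -/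
def extConfig {n r : ℕ} (p : Fin n → EuclideanSpace ℝ (Fin r)) :
    Matrix (Fin (r + 1)) (Fin n) ℝ :=
  fun i j => if h : (i : ℕ) < r then p j ⟨(i : ℕ), h⟩ else 1

/-- `Z` is a Gale matrix of `G(p)`: its columns form a basis of the null space of the
extended configuration matrix of `G(p)`. -/
def IsGaleMatrix {n r : ℕ} (p : Fin n → EuclideanSpace ℝ (Fin r))
    (Z : Matrix (Fin n) (Fin (n - r - 1)) ℝ) : Prop :=
  extConfig p * Z = 0 ∧
  LinearIndependent ℝ (fun k : Fin (n - r - 1) => Zᵀ k) ∧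
  ∀ x : Fin n → ℝ, extConfig p *ᵥ x = 0 →
    x ∈ Submodule.span ℝ (Set.range fun k : Fin (n - r - 1) => Zᵀ k)

/-- Property (A) of a Gale matrix `Z` (with respect to the PEO `1, 2, ..., n` of `G`):
`z_ii = 1` for `i ≤ n-r-1`, `z_ij = 0` for `i < j`, and `z_ij = 0` whenever `i > j` and
`(i,j)` is not an edge of `G`. -/
def PropertyA {n r : ℕ} (G : SimpleGraph (Fin n))
    (Z : Matrix (Fin n) (Fin (n - r - 1)) ℝ) : Prop :=
  (∀ (i : Fin n) (h : (i : ℕ) < n - r - 1), Z i ⟨(i : ℕ), h⟩ = 1) ∧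
  (∀ (i : Fin n) (j : Fin (n - r - 1)), (i : ℕ) < (j : ℕ) → Z i j = 0) ∧
  (∀ (i : Fin n) (j : Fin (n - r - 1)), (j : ℕ) < (i : ℕ) →
    ¬ G.Adj i (Fin.castLE (by omega) j) → Z i j = 0)

/-- A symmetric matrix of rank `k` has generic rank profile if its first `k` leading
principal minors are nonzero. -/
def HasGenericRankProfile {n : ℕ} (A : Matrix (Fin n) (Fin n) ℝ) (k : ℕ) : Prop :=
  ∀ t : ℕ, 0 < t → t ≤ k → ∀ h : t ≤ n,
    (A.submatrix (Fin.castLE h) (Fin.castLE h)).det ≠ 0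


/-- `G` is an `(r+1)`-lateration graph: there is an ordering `v 0, ..., v (n-1)` of the
vertices such that the first `r+2` vertices induce a clique and every later vertex is
adjacent to at least `r+1` of the preceding vertices. -/
def IsLaterationGraph {n : ℕ} (r : ℕ) (G : SimpleGraph (Fin n)) : Prop :=
  ∃ v : Fin n ≃ Fin n,
    (∀ i j : Fin n, (i : ℕ) < r + 2 → (j : ℕ) < r + 2 → i ≠ j → G.Adj (v i) (v j)) ∧
    ∀ j : Fin n, r + 2 ≤ (j : ℕ) →
      r + 1 ≤ (Finset.univ.filter fun i : Fin n =>
        (i : ℕ) < (j : ℕ) ∧ G.Adj (v i) (v j)).card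

/-- `gaussElim A t` is the matrix obtained from `A` after `t` steps of Gauss elimination
(the `t`-th step zeroes out the entries below the pivot in position `(t,t)`,
1-indexed, and normalizes the pivot row). -/
def gaussElim {n : ℕ} (A : Matrix (Fin n) (Fin n) ℝ) : ℕ → Matrix (Fin n) (Fin n) ℝ
  | 0 => A
  | t + 1 =>
    let B := gaussElim A t
    if h : t < n then
      let piv : Fin n := ⟨t, h⟩
      fun i j =>
        if (i : ℕ) < t then B i j
        else if (i : ℕ) = t then B i j / B piv piv
        else if (j : ℕ) ≤ t then 0
        else B i j - B i piv * B piv j / B piv piv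
    else B

/-! A set `X` of `r` vertices whose removal disconnects `G` has, by general position, an affine
span `s` that is a hyperplane containing no other point of `p`. Reflecting in `s` one component
`A` of `G - X` preserves every bar, since bars leaving `A` end in `X ⊆ s`. It changes the
distance from a point `a ∈ A` to a point `b` of another component: otherwise the hyperplane
`s` and `b` would all lie on the perpendicular bisector of `a` and its mirror image, whereas
they affinely span `ℝ^r`. -/

namespace SimpleGraph

variable {V : Type*} {G : SimpleGraph V}

theorem exists_adj_closed_of_not_connected_induce {S : Set V} (hS : S.Nonempty)
    (h : ¬ (G.induce S).Connected) :
    ∃ A ⊆ S, ∃ a ∈ A, ∃ b ∈ S, b ∉ A ∧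
      ∀ i j, G.Adj i j → i ∈ A → j ∉ A → j ∉ S := by
  have : Nonempty S := hS.to_subtype
  obtain ⟨a, b, hab⟩ : ∃ a b : S, ¬ (G.induce S).Reachable a b := by
    simpa [connected_iff, Preconnected, this] using h
  refine ⟨{v | ∃ hv : v ∈ S, (G.induce S).Reachable a ⟨v, hv⟩}, fun v hv => hv.1,
    a, ⟨a.2, .rfl⟩, b, b.2, fun ⟨_, hb⟩ => hab hb, ?_⟩
  rintro i j hij ⟨hi, hai⟩ hjA hj
  exact hjA ⟨hj, hai.trans (Adj.reachable (G := G.induce S) hij)⟩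

end SimpleGraph

theorem exists_separator_of_not_isKVertexConnected {n k : ℕ} {G : SimpleGraph (Fin n)}
    (hn : k + 2 ≤ n) (h : ¬ IsKVertexConnected (k + 1) G) :
    ∃ X : Finset (Fin n), X.card = k ∧ ¬ (G.induce (X : Set (Fin n))ᶜ).Connected := by
  rw [IsKVertexConnected, not_or, not_and, not_and] at h
  obtain ⟨hnot_top, hsep⟩ := h
  rcases Nat.lt_or_ge (k + 2) n with hlt | hle
  · push Not at hsep
    simpa using hsep hlt
  -- With exactly `k + 2` vertices, delete all but two non-adjacent ones.
  obtain ⟨a, b, hab, hnadj⟩ : ∃ a b : Fin n, a ≠ b ∧ ¬ G.Adj a b := by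
    by_contra! hall
    exact hnot_top (by omega) (SimpleGraph.ext <| funext₂ fun a b =>
      propext ⟨SimpleGraph.Adj.ne, hall a b⟩)
  refine ⟨{a, b}ᶜ, ?_, fun hconn => ?_⟩
  · rw [Finset.card_compl, Finset.card_pair hab, Fintype.card_fin]
    omega
  have hmem : ∀ v : Fin n, v ∈ ((({a, b}ᶜ : Finset (Fin n)) : Set (Fin n))ᶜ) ↔
      v = a ∨ v = b := by
    simp only [Finset.coe_compl, compl_compl, Finset.coe_pair, Set.mem_insert_iff,
      Set.mem_singleton_iff, implies_true]
  obtain ⟨w⟩ := hconn.preconnected ⟨a, (hmem a).2 (.inl rfl)⟩ ⟨b, (hmem b).2 (.inr rfl)⟩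
  have hstep := w.adj_snd (SimpleGraph.Walk.not_nil_of_ne (by simpa using hab))
  rcases (hmem _).1 w.snd.2 with hc | hc
  · exact hstep.ne (Subtype.ext hc.symm)
  · exact hnadj (hc ▸ hstep)

section GeneralPosition

variable {n r : ℕ} {p : Fin n → EuclideanSpace ℝ (Fin r)}

theorem InGeneralPosition.affineSpan_image_eq_top (hgp : InGeneralPosition p)
    {s : Finset (Fin n)} (hs : s.card = r + 1) : affineSpan ℝ (p '' s) = ⊤ := by
  have htop := (hgp s hs).affineSpan_eq_top_iff_card_eq_finrank_add_one.2 (by simp [hs])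
  rwa [Set.image_eq_range]

theorem InGeneralPosition.notMem_affineSpan_image (hgp : InGeneralPosition p)
    {X : Finset (Fin n)} (hX : X.card = r) {a : Fin n} (ha : a ∉ X) :
    p a ∉ affineSpan ℝ (p '' X) := by
  have hind := hgp (insert a X) (by rw [Finset.card_insert_of_notMem ha, hX])
  have := hind.mem_affineSpan_iff ⟨a, Finset.mem_insert_self a X⟩ {i | (i : Fin n) ∈ X}
  simp only [Set.mem_ofPred_eq, ha, iff_false] at this
  convert this using 3
  ext x
  simp only [Set.mem_image, Finset.mem_coe, Set.mem_ofPred_eq, Subtype.exists, Finset.mem_insert]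
  exact ⟨fun ⟨i, hi, hx⟩ => ⟨i, .inr hi, hi, hx⟩,
    fun ⟨i, _, hi, hx⟩ => ⟨i, hi, hx⟩⟩

end GeneralPosition

section Reflection

open EuclideanGeometry

theorem dist_reflection_ne_of_affineSpan_insert_eq_top {V P : Type*}
    [NormedAddCommGroup V] [InnerProductSpace ℝ V] [MetricSpace P] [NormedAddTorsor V P]
    {s : AffineSubspace ℝ P} [Nonempty s] [s.direction.HasOrthogonalProjection] {a b : P}
    (ha : a ∉ s) (hb : affineSpan ℝ (insert b (s : Set P)) = ⊤) :
    dist (reflection s a) b ≠ dist a b := by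
  intro hdist
  have hsub : insert b (s : Set P) ⊆ AffineSubspace.perpBisector a (reflection s a) := by
    rintro x (rfl | hx) <;> rw [SetLike.mem_coe]
    · rw [AffineSubspace.mem_perpBisector_iff_dist_eq', hdist]
    · rw [AffineSubspace.mem_perpBisector_iff_dist_eq, dist_reflection_eq_of_mem s hx]
  have htop := top_le_iff.1 (hb ▸ affineSpan_le.2 hsub)
  exact ha ((reflection_eq_self_iff a).1 (AffineSubspace.perpBisector_eq_top.1 htop).symm)

theorem frameworksEquivalent_reflection_of_adj_closed {n r : ℕ} (G : SimpleGraph (Fin n))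
    (p : Fin n → EuclideanSpace ℝ (Fin r)) (s : AffineSubspace ℝ (EuclideanSpace ℝ (Fin r)))
    [Nonempty s] [s.direction.HasOrthogonalProjection] (A : Set (Fin n))
    (hA : ∀ i j, G.Adj i j → i ∈ A → j ∉ A → p j ∈ s) :
    FrameworksEquivalent G p fun i => if i ∈ A then reflection s (p i) else p i := by
  intro i j hij
  simp only [← dist_eq_norm]
  by_cases hi : i ∈ A <;> by_cases hj : j ∈ A <;> simp only [hi, hj, if_true, if_false]
  · exact (reflection s).dist_map _ _
  · rw [dist_comm, dist_reflection_eq_of_mem s (hA i j hij hi hj), dist_comm]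
  · exact dist_reflection_eq_of_mem s (hA j i hij.symm hj hi) _

end Reflection

theorem stmt4_not_globally_rigid_of_not_vertex_connected_general
    {n r : ℕ} (G : SimpleGraph (Fin n)) (p : Fin n → EuclideanSpace ℝ (Fin r))
    (hconn : G.Connected) (hgp : InGeneralPosition p)
    (hn : r + 2 ≤ n) (hcon : ¬ IsKVertexConnected (r + 1) G) :
    ∃ q : Fin n → EuclideanSpace ℝ (Fin r),
      FrameworksEquivalent G p q ∧ ¬ FrameworksCongruent p q := by
  obtain ⟨X, hXcard, hXdisc⟩ := exists_separator_of_not_isKVertexConnected hn hcon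
  obtain ⟨x, hx⟩ : X.Nonempty := Finset.nonempty_iff_ne_empty.2 fun hX => hXdisc <| by
    rw [hX, Finset.coe_empty, Set.compl_empty]
    exact G.induceUnivIso.connected_iff.2 hconn
  have hcompl : ((X : Set (Fin n))ᶜ).Nonempty := by
    rw [← Finset.coe_compl, Finset.coe_nonempty, ← Finset.card_pos, Finset.card_compl,
      Fintype.card_fin]
    omega
  obtain ⟨A, hAX, a, haA, b, hbX, hbA, hA⟩ :=
    SimpleGraph.exists_adj_closed_of_not_connected_induce hcompl hXdisc
  let s := affineSpan ℝ (p '' X)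
  have : Nonempty s := ⟨⟨p x, subset_affineSpan ℝ _ (Set.mem_image_of_mem p hx)⟩⟩
  refine ⟨fun i => if i ∈ A then EuclideanGeometry.reflection s (p i) else p i,
    frameworksEquivalent_reflection_of_adj_closed G p s A fun i j hij hi hj =>
      subset_affineSpan ℝ _ (Set.mem_image_of_mem p (by simpa using hA i j hij hi hj)),
    fun hcong => ?_⟩
  have hspan : affineSpan ℝ (insert (p b) (s : Set _)) = ⊤ := by
    rw [affineSpan_insert_affineSpan, ← Set.image_insert_eq, ← Finset.coe_insert]
    exact hgp.affineSpan_image_eq_top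
      (by rw [Finset.card_insert_of_notMem (by simpa using hbX), hXcard])
  refine dist_reflection_ne_of_affineSpan_insert_eq_top
    (hgp.notMem_affineSpan_image hXcard (by simpa using hAX haA)) hspan ?_
  simpa only [haA, hbA, if_true, if_false, ← dist_eq_norm] using hcong a b

/-- If a bar framework `G(p)` on `n ≥ r+2` vertices in general position in
`ℝ^r` has a graph `G` that is not `(r+1)`-vertex connected, then `G(p)` is not globally
rigid: there is a framework `G(q)` in `ℝ^r` equivalent but not congruent to `G(p)`. -/
theorem stmt4_not_globally_rigid_of_not_vertex_connected
    {n r : ℕ} (G : SimpleGraph (Fin n)) (p : Fin n → EuclideanSpace ℝ (Fin r))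
    (hconn : G.Connected) (hspan : AffinelySpans p) (hgp : InGeneralPosition p)
    (hn : r + 2 ≤ n) (hcon : ¬ IsKVertexConnected (r + 1) G) :
    ∃ q : Fin n → EuclideanSpace ℝ (Fin r),
      FrameworksEquivalent G p q ∧ ¬ FrameworksCongruent p q :=
  stmt4_not_globally_rigid_of_not_vertex_connected_general G p hconn hgp hn hcon

end
end

section
/- A finite simple graph G is chordal if and only if G has a perfect elimination ordering. -/
open Matrix
open scoped Classical

noncomputable section

/-!
A perfect elimination ordering leaves no long chordless cycle: on a cycle of length at least 4,
the vertex eliminated first has its two cycle neighbours among the later vertices, so they are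
adjacent, and that edge is a chord.

Conversely, following Dirac, every finite vertex set `W` of a chordal graph is a clique or has two
non-adjacent simplicial vertices. If `a, c ∈ W` are not adjacent, let `C` be the component of `c`
in `W` minus the closed neighbourhood of `a`, and `S` the vertices of `W` adjacent to `C` and to
`a`. Any two `s, t ∈ S` are adjacent: otherwise a chordless `s`-`t` path through `C`, closed up
through `a`, would be a chordless cycle of length at least 4. So, by induction, the smaller set
`C ∪ S` has a simplicial vertex inside `C`, and it is simplicial in `W` since its neighbours in
`W` all lie in `C ∪ S`. Eliminating simplicial vertices one at a time gives the ordering.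
-/

namespace SimpleGraph.Walk

variable {V : Type*} {G : SimpleGraph V} {u v x y : V}

theorem two_le_length_of_ne_of_notMem_edges (p : G.Walk x y) (hxy : x ≠ y)
    (h : s(x, y) ∉ p.edges) : 2 ≤ p.length := by
  match p with
  | .nil => exact absurd rfl hxy
  | .cons _ .nil => simp at h
  | .cons _ (.cons _ _) => simp

theorem exists_length_lt_of_isChord {p : G.Walk u v} (hc : p.IsChord s(x, y)) :
    ∃ q : G.Walk u v, q.length < p.length ∧ q.support ⊆ p.support := by
  obtain ⟨hxy, hnot, hx, hy⟩ := isChord_sym2Mk.mp hc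
  obtain ⟨q, r, rfl⟩ := mem_support_iff_exists_append.mp hy
  rcases (mem_support_append_iff _ _).mp hx with hx | hx
  · obtain ⟨q₁, q₂, rfl⟩ := mem_support_iff_exists_append.mp hx
    have := q₂.two_le_length_of_ne_of_notMem_edges hxy.ne (by simp_all [edges_append])
    refine ⟨q₁.append (cons hxy r), by simp only [length_append, length_cons]; omega,
      fun z hz => ?_⟩
    simp only [mem_support_append_iff, support_cons, List.mem_cons] at hz ⊢
    rcases hz with hz | rfl | hz
    exacts [.inl (.inl hz), .inl (.inl q₁.end_mem_support), .inr hz]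
  · obtain ⟨r₁, r₂, rfl⟩ := mem_support_iff_exists_append.mp hx
    have := r₁.two_le_length_of_ne_of_notMem_edges hxy.ne.symm
      (by simp_all [edges_append, Sym2.eq_swap])
    refine ⟨q.append (cons hxy.symm r₂), by simp only [length_append, length_cons]; omega,
      fun z hz => ?_⟩
    simp only [mem_support_append_iff, support_cons, List.mem_cons] at hz ⊢
    rcases hz with hz | rfl | hz
    exacts [.inl hz, .inr (.inl r₁.start_mem_support), .inr (.inr hz)]

theorem exists_isPath_isChordless_support_subset (p : G.Walk u v) :
    ∃ q : G.Walk u v, q.IsPath ∧ q.IsChordless ∧ q.support ⊆ p.support := by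
  induction h : p.length using Nat.strong_induction_on generalizing p with
  | _ n ih =>
    by_cases hc : p.bypass.IsChordless
    · exact ⟨p.bypass, p.bypass_isPath, hc, p.support_bypass_subset_support⟩
    · obtain ⟨e, he⟩ : ∃ e, p.bypass.IsChord e := by simpa [IsChordless] using hc
      induction e using Sym2.ind
      obtain ⟨q, hlt, hsub⟩ := exists_length_lt_of_isChord he
      obtain ⟨r, hr, hrc, hrsub⟩ := ih _ (h ▸ hlt.trans_le p.length_bypass_le_length) q rfl
      exact ⟨r, hr, hrc, fun z hz => p.support_bypass_subset_support (hsub (hrsub hz))⟩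

theorem IsPath.start_ne_penultimate {p : G.Walk x y} (hp : p.IsPath) (h : 2 ≤ p.length) :
    x ≠ p.penultimate := fun heq => by
  have := hp.getVert_injOn (Nat.zero_le _ : 0 ≤ p.length)
    (Nat.sub_le _ _ : p.length - 1 ≤ p.length) (by simpa using heq)
  omega

theorem IsPath.mk_start_penultimate_notMem_edges {p : G.Walk x y} (hp : p.IsPath)
    (h : 3 ≤ p.length) : s(x, p.penultimate) ∉ p.edges := fun hmem => by
  have := hp.getVert_injOn (by omega : 1 ≤ p.length) (Nat.sub_le _ _ : p.length - 1 ≤ p.length)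
    (hp.eq_snd_of_mem_edges hmem).symm
  omega

end SimpleGraph.Walk

section Chordal

open SimpleGraph Walk

variable {V : Type*} {G : SimpleGraph V}

theorem IsChordal.adj_of_walk_avoiding_neighborSet {a s t : V} (hG : IsChordal G) (hs : G.Adj a s)
    (ht : G.Adj a t) (hst : s ≠ t) (p : G.Walk s t)
    (hp : ∀ z ∈ p.support, z = s ∨ z = t ∨ z ≠ a ∧ ¬ G.Adj a z) : G.Adj s t := by
  by_contra hnadj
  obtain ⟨P, hP, hPc, hPsub⟩ := p.exists_isPath_isChordless_support_subset
  have haP : a ∉ P.support := fun ha => by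
    rcases hp a (hPsub ha) with h | h | h
    exacts [hs.ne h, ht.ne h, h.1 rfl]
  have hlen := P.two_le_length_of_ne_of_notMem_edges hst fun h => hnadj (P.adj_of_mem_edges h)
  let c : G.Walk a a := cons hs (P.concat ht.symm)
  have hc : c.IsCycle := by
    refine (cons_isCycle_iff _ hs).mpr ⟨hP.concat haP ht.symm, fun h => ?_⟩
    rw [edges_concat, List.concat_eq_append, List.mem_append, List.mem_singleton] at h
    rcases h with h | h
    · exact haP (P.fst_mem_support_of_mem_edges h)
    · rcases Sym2.eq_iff.mp h with ⟨-, h⟩ | ⟨-, h⟩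
      exacts [hs.ne h.symm, hst h]
  have hc4 : 4 ≤ c.length := by simp only [c, length_cons, length_concat]; omega
  -- A chord of `c` is not on `P`, and through `a` it could only reach `s` or `t`: cycle edges.
  obtain ⟨u, w, hu, hw, huw, hch⟩ := hG a c hc hc4
  have hsupp : ∀ z ∈ c.support, z = a ∨ z ∈ P.support := fun z hz => by
    simp only [c, support_cons, support_concat, List.mem_cons, List.mem_append,
      List.not_mem_nil] at hz
    tauto
  simp only [c, edges_cons, edges_concat, List.concat_eq_append, List.mem_cons, List.mem_append,
    List.not_mem_nil, or_false] at hch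
  have hPa : ∀ z ∈ P.support, G.Adj a z → z = s ∨ z = t := fun z hz haz => by
    rcases hp z (hPsub hz) with h | h | h
    exacts [.inl h, .inr h, absurd haz h.2]
  rcases hsupp u hu with rfl | huP
  · rcases hsupp w hw with rfl | hwP
    · exact huw.ne rfl
    · rcases hPa _ hwP huw with rfl | rfl <;> simp at hch
  · rcases hsupp w hw with rfl | hwP
    · rcases hPa _ huP huw.symm with rfl | rfl <;> simp [Sym2.eq_swap] at hch
    · exact hch (.inr (.inl (hPc.mem_edges huP hwP huw)))

theorem IsChordal.adj_of_adj_of_walk_avoiding_neighborSet {a s t x y : V} (hG : IsChordal G)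
    (hs : G.Adj a s) (ht : G.Adj a t) (hst : s ≠ t) (hsx : G.Adj s x) (hyt : G.Adj y t)
    (p : G.Walk x y) (hp : ∀ z ∈ p.support, z ≠ a ∧ ¬ G.Adj a z) : G.Adj s t := by
  refine hG.adj_of_walk_avoiding_neighborSet hs ht hst (cons hsx (p.concat hyt)) fun z hz => ?_
  simp only [support_cons, support_concat, List.mem_cons, List.mem_append, List.not_mem_nil,
    or_false] at hz
  rcases hz with rfl | hz | rfl
  exacts [.inl rfl, .inr (.inr (hp z hz)), .inr (.inl rfl)]

def IsSimplicialIn (G : SimpleGraph V) (W : Set V) (v : V) : Prop :=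
  G.IsClique (G.neighborSet v ∩ W)

def CliqueOrTwoSimplicial (G : SimpleGraph V) (W : Finset V) : Prop :=
  G.IsClique (W : Set V) ∨ ∃ x ∈ W, ∃ y ∈ W, x ≠ y ∧ ¬ G.Adj x y ∧
    IsSimplicialIn G W x ∧ IsSimplicialIn G W y

theorem CliqueOrTwoSimplicial.exists_simplicialIn_mem {W W' C : Finset V}
    (h : CliqueOrTwoSimplicial G W') (hCne : C.Nonempty)
    (hS : G.IsClique (↑(W' \ C) : Set V)) (hnbr : ∀ v ∈ C, G.neighborSet v ∩ W ⊆ W') :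
    ∃ v ∈ C, IsSimplicialIn G W v := by
  have lift : ∀ v ∈ C, IsSimplicialIn G W' v → IsSimplicialIn G W v := fun v hv hvs =>
    IsClique.subset (Set.subset_inter Set.inter_subset_left (hnbr v hv)) hvs
  rcases h with hclique | ⟨x, hx, y, hy, hxy, hnxy, hxs, hys⟩
  · obtain ⟨c, hc⟩ := hCne
    exact ⟨c, hc, lift c hc (hclique.subset Set.inter_subset_right)⟩
  · by_cases hxC : x ∈ C
    · exact ⟨x, hxC, lift x hxC hxs⟩
    · have hyC : y ∈ C := by
        by_contra hyC
        exact hnxy (hS (by simp [hx, hxC]) (by simp [hy, hyC]) hxy)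
      exact ⟨y, hyC, lift y hyC hys⟩

theorem IsChordal.exists_simplicialIn_not_adj (hG : IsChordal G) {W : Finset V}
    (ih : ∀ W' ⊂ W, CliqueOrTwoSimplicial G W') {a c : V} (ha : a ∈ W) (hc : c ∈ W)
    (hac : a ≠ c) (hnadj : ¬ G.Adj a c) :
    ∃ v ∈ W, v ≠ a ∧ ¬ G.Adj a v ∧ IsSimplicialIn G W v := by
  let D : Set V := {x | x ∈ W ∧ x ≠ a ∧ ¬ G.Adj a x}
  let C : Finset V := W.filter fun x => ∃ p : G.Walk c x, ∀ z ∈ p.support, z ∈ D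
  let S : Finset V := W.filter fun s => G.Adj a s ∧ ∃ x ∈ C, G.Adj s x
  have hCD : ∀ x ∈ C, x ∈ D := fun x hx => by
    obtain ⟨-, p, hp⟩ := Finset.mem_filter.mp hx
    exact hp x p.end_mem_support
  have hcC : c ∈ C := Finset.mem_filter.mpr ⟨hc, nil, by simp [D, hc, hac.symm, hnadj]⟩
  have hS : G.IsClique (S : Set V) := by
    intro s hs t ht hst
    obtain ⟨-, has, x, hx, hsx⟩ := Finset.mem_filter.mp hs
    obtain ⟨-, hat, y, hy, hty⟩ := Finset.mem_filter.mp ht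
    obtain ⟨-, px, hpx⟩ := Finset.mem_filter.mp hx
    obtain ⟨-, py, hpy⟩ := Finset.mem_filter.mp hy
    refine hG.adj_of_adj_of_walk_avoiding_neighborSet has hat hst hsx hty.symm
      (px.reverse.append py) fun z hz => ?_
    rw [mem_support_append_iff, support_reverse, List.mem_reverse] at hz
    exact hz.elim (fun hz => (hpx z hz).2) fun hz => (hpy z hz).2
  have hnbr : ∀ v ∈ C, G.neighborSet v ∩ W ⊆ ↑(C ∪ S) := by
    intro v hv y hy
    obtain ⟨hvy, hyW⟩ : G.Adj v y ∧ y ∈ W := hy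
    obtain ⟨-, p, hp⟩ := Finset.mem_filter.mp hv
    simp only [Finset.coe_union, Set.mem_union, Finset.mem_coe]
    by_cases hyD : y ∈ D
    · refine .inl (Finset.mem_filter.mpr ⟨hyW, p.concat hvy, fun z hz => ?_⟩)
      rw [support_concat, List.mem_append, List.mem_singleton] at hz
      rcases hz with hz | rfl
      exacts [hp z hz, hyD]
    · have hya : y ≠ a := fun h => (hCD v hv).2.2 (h ▸ hvy.symm)
      have hay : G.Adj a y := by simpa [D, hyW, hya] using hyD
      exact .inr (Finset.mem_filter.mpr ⟨hyW, hay, v, hv, hvy.symm⟩)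
  have hCS : C ∪ S ⊂ W := by
    refine Finset.ssubset_iff_of_subset (Finset.union_subset (Finset.filter_subset _ _)
      (Finset.filter_subset _ _)) |>.mpr ⟨a, ha, fun haCS => ?_⟩
    rcases Finset.mem_union.mp haCS with haC | haS
    · exact (hCD a haC).2.1 rfl
    · exact G.irrefl (Finset.mem_filter.mp haS).2.1
  have hS' : G.IsClique (↑((C ∪ S) \ C) : Set V) :=
    hS.subset fun z hz => by simp only [Finset.coe_sdiff, Finset.coe_union] at hz; grind
  obtain ⟨v, hv, hvs⟩ :=
    (ih _ hCS).exists_simplicialIn_mem ⟨c, hcC⟩ hS' hnbr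
  exact ⟨v, (hCD v hv).1, (hCD v hv).2.1, (hCD v hv).2.2, hvs⟩

theorem IsChordal.cliqueOrTwoSimplicial (hG : IsChordal G) (W : Finset V) :
    CliqueOrTwoSimplicial G W := by
  induction W using Finset.strongInduction with
  | H W ih =>
    by_cases hW : G.IsClique (W : Set V)
    · exact .inl hW
    obtain ⟨a, ha, c, hc, hac, hnadj⟩ : ∃ a ∈ W, ∃ c ∈ W, a ≠ c ∧ ¬ G.Adj a c := by
      simpa [IsClique, Set.Pairwise] using hW
    obtain ⟨v, hv, hva, hav, hvs⟩ := hG.exists_simplicialIn_not_adj ih ha hc hac hnadj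
    obtain ⟨w, hw, hwv, hvw, hws⟩ :=
      hG.exists_simplicialIn_not_adj ih hv ha hva fun h => hav h.symm
    exact .inr ⟨v, hv, w, hw, hwv.symm, hvw, hvs, hws⟩

theorem IsChordal.exists_simplicialIn (hG : IsChordal G) {W : Finset V} (hW : W.Nonempty) :
    ∃ v ∈ W, IsSimplicialIn G W v := by
  rcases hG.cliqueOrTwoSimplicial W with hclique | ⟨x, hx, -, -, -, -, hxs, -⟩
  · obtain ⟨v, hv⟩ := hW
    exact ⟨v, hv, hclique.subset Set.inter_subset_right⟩
  · exact ⟨x, hx, hxs⟩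

def IsPerfectEliminationList (G : SimpleGraph V) : List V → Prop
  | [] => True
  | v :: l => IsSimplicialIn G {x | x ∈ l} v ∧ IsPerfectEliminationList G l

theorem IsPerfectEliminationList.adj_of_idxOf_lt {l : List V}
    (hl : IsPerfectEliminationList G l) {u v w : V} (hv : v ∈ l) (hw : w ∈ l)
    (huv : l.idxOf u < l.idxOf v) (huw : l.idxOf u < l.idxOf w) (hvw : v ≠ w)
    (hadjv : G.Adj u v) (hadjw : G.Adj u w) : G.Adj v w := by
  induction l with
  | nil => simp at hv
  | cons x l ih =>
    have hne : ∀ y, x ≠ y → (x :: l).idxOf y = l.idxOf y + 1 := fun y => List.idxOf_cons_ne l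
    have hxv : x ≠ v := by rintro rfl; simp at huv
    have hxw : x ≠ w := by rintro rfl; simp at huw
    rw [hne v hxv] at huv
    rw [hne w hxw] at huw
    have hv' : v ∈ l := (List.mem_cons.mp hv).resolve_left (Ne.symm hxv)
    have hw' : w ∈ l := (List.mem_cons.mp hw).resolve_left (Ne.symm hxw)
    by_cases hxu : x = u
    · subst hxu
      exact hl.1 ⟨hadjv, hv'⟩ ⟨hadjw, hw'⟩ hvw
    · rw [hne u hxu] at huv huw
      exact ih hl.2 hv' hw' (by omega) (by omega)

theorem IsChordal.exists_perfectEliminationList (hG : IsChordal G) (W : Finset V) :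
    ∃ l : List V, l.Nodup ∧ (∀ x, x ∈ l ↔ x ∈ W) ∧ IsPerfectEliminationList G l := by
  induction W using Finset.strongInduction with
  | H W ih =>
    rcases W.eq_empty_or_nonempty with rfl | hW
    · exact ⟨[], List.nodup_nil, by simp, trivial⟩
    obtain ⟨v, hv, hvs⟩ := hG.exists_simplicialIn hW
    obtain ⟨l, hnd, hmem, hl⟩ := ih _ (Finset.erase_ssubset hv)
    refine ⟨v :: l, List.nodup_cons.mpr ⟨fun h => by simpa using (hmem v).mp h, hnd⟩,
      fun x => ?_, ?_, hl⟩
    · by_cases hx : x = v <;> simp [hmem, hx, hv]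
    · exact IsClique.subset (Set.inter_subset_inter_right _
        fun x hx => Finset.mem_of_mem_erase ((hmem x).mp hx)) hvs

theorem IsChordal.exists_perfectEliminationOrder [Fintype V] (hG : IsChordal G) :
    ∃ π : V ≃ Fin (Fintype.card V), ∀ u v w : V, π u < π v → π u < π w → v ≠ w →
      G.Adj u v → G.Adj u w → G.Adj v w := by
  obtain ⟨l, hnd, hmem, hl⟩ := hG.exists_perfectEliminationList Finset.univ
  have hall : ∀ x, x ∈ l := fun x => (hmem x).mpr (Finset.mem_univ x)
  let e := hnd.getEquivOfForallMemList l hall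
  have hlen : l.length = Fintype.card V := by simpa using Fintype.card_congr e
  have hidx : ∀ x, (e.symm.trans (finCongr hlen) x : ℕ) = l.idxOf x := fun x => by
    simp [e, List.Nodup.getEquivOfForallMemList]
  refine ⟨e.symm.trans (finCongr hlen), fun u v w huv huw => ?_⟩
  rw [Fin.lt_def, hidx, hidx] at huv huw
  exact hl.adj_of_idxOf_lt (hall v) (hall w) huv huw

theorem isChordal_of_perfectEliminationOrder {β : Type*} [LinearOrder β] (f : V → β)
    (hf : Function.Injective f)
    (hpeo : ∀ u v w : V, f u < f v → f u < f w → v ≠ w →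
      G.Adj u v → G.Adj u w → G.Adj v w) :
    IsChordal G := by
  intro v₀ c hc hlen
  obtain ⟨u, hu, hmin⟩ := c.support.toFinset.exists_min_image f ⟨v₀, by simp⟩
  rw [List.mem_toFinset] at hu
  have hlt : ∀ z ∈ c.support, z ≠ u → f u < f z := fun z hz hzu =>
    (hmin z (List.mem_toFinset.mpr hz)).lt_of_ne (hf.ne hzu.symm)
  obtain ⟨x, hux, q, hrot⟩ := not_nil_iff.mp (hc.rotate hu).not_nil
  obtain ⟨hq, -⟩ := (cons_isCycle_iff q hux).mp (hrot ▸ hc.rotate hu)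
  have hqlen : 3 ≤ q.length := by
    have := c.length_rotate u hu
    rw [hrot, length_cons] at this
    omega
  have hmem : ∀ z ∈ q.support, z ∈ c.support := fun z hz =>
    (c.mem_support_rotate_iff u hu).mp (hrot ▸ List.mem_cons_of_mem u hz)
  have hwu : G.Adj q.penultimate u := q.adj_penultimate (by rw [← length_eq_zero_iff]; omega)
  have hx := hmem x q.start_mem_support
  have hw := hmem q.penultimate (q.getVert_mem_support _)
  refine ⟨x, q.penultimate, hx, hw, hpeo u x _ (hlt x hx hux.ne') (hlt _ hw hwu.ne)
    (hq.start_ne_penultimate (by omega)) hux hwu.symm, fun hxw => ?_⟩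
  have := (c.rotate_edges u hu).mem_iff.mpr hxw
  rw [hrot, edges_cons, List.mem_cons] at this
  rcases this with h | h
  · rcases Sym2.eq_iff.mp h with ⟨h, -⟩ | ⟨-, h⟩
    exacts [hux.ne h.symm, hwu.ne h]
  · exact hq.mk_start_penultimate_notMem_edges hqlen h

end Chordal

/-- Fulkerson–Gross: A finite simple graph `G` is chordal if and only if
`G` has a perfect elimination ordering. -/
theorem stmt6_chordal_iff_exists_peo
    {V : Type*} [Fintype V] (G : SimpleGraph V) :
    IsChordal G ↔
      ∃ π : V ≃ Fin (Fintype.card V),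
        ∀ u v w : V, π u < π v → π u < π w → v ≠ w →
          G.Adj u v → G.Adj u w → G.Adj v w :=
  ⟨IsChordal.exists_perfectEliminationOrder,
    fun ⟨π, hπ⟩ => isChordal_of_perfectEliminationOrder π π.injective hπ⟩
end
end

section
/- Let G(p) be a bar framework on n vertices in general position in R^r with r̄ = n−r−1 ≥ 1, and let S be a stress matrix of G(p) of rank r̄. Then for any two subsets α and β of {1,...,n} each of cardinality r̄, the r̄×r̄ submatrix of S whose rows are indexed by α and whose columns are indexed by β is nonsingular. -/
open Matrix
open scoped Classical

noncomputable section

/-!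
Let `P` be the extended configuration matrix, whose columns are the vectors `(pʲ; 1)`. The
equilibrium condition says `S Pᵀ = 0`, and general position says that every `(r+1) × (r+1)`
minor of `P` is nonsingular. Hence the rows of `P` are independent, and since `S` has nullity
`r + 1` they span `ker S`; consequently no nonzero vector of `ker S` vanishes on `r + 1`
coordinates. Dually, `P S = 0`, so no nonzero vector of `range S` vanishes on `n - r - 1`
coordinates either. If `S[α, β] x = 0`, extend `x` by zero off `β` to `x̃`: then `S x̃ ∈ range S`
vanishes on `α`, so `S x̃ = 0`; then `x̃ ∈ ker S` vanishes off `β`, so `x̃ = 0`.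
-/

open Function

theorem Finset.exists_injective_fin_range_eq {ι : Type*} (s : Finset ι) :
    ∃ e : Fin s.card → ι, Injective e ∧ Set.range e = s :=
  ⟨fun l => s.equivFin.symm l, Subtype.val_injective.comp s.equivFin.symm.injective, by
    ext i
    exact ⟨fun ⟨l, hl⟩ => hl ▸ (s.equivFin.symm l).2, fun hi => ⟨s.equivFin ⟨i, hi⟩, by simp⟩⟩⟩

namespace Matrix

variable {K ι m n : Type*} [Field K]

theorem mulVec_extend_zero [Fintype ι] [Fintype m] (S : Matrix n ι K) {g : m → ι}
    (hg : Injective g) (x : m → K) : S *ᵥ extend g x 0 = S.submatrix id g *ᵥ x := by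
  ext i
  refine (Fintype.sum_of_injective g hg _ _ (fun j hj => ?_) fun a => ?_).symm
  · rw [extend_apply' _ _ _ (fun ⟨a, ha⟩ => hj ⟨a, ha⟩), Pi.zero_apply, mul_zero]
  · rw [hg.extend_apply]
    rfl

theorem det_submatrix_ne_zero_of_ker_of_range [Fintype ι] [Fintype m] [DecidableEq m]
    {S : Matrix ι ι K} {f g : m → ι} (hg : Injective g)
    (hker : ∀ x, S *ᵥ x = 0 → (∀ i ∉ Set.range g, x i = 0) → x = 0)
    (hrange : ∀ x, (∀ a, (S *ᵥ x) (f a) = 0) → S *ᵥ x = 0) :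
    (S.submatrix f g).det ≠ 0 := by
  intro hdet
  obtain ⟨x, hx, hSx⟩ := exists_mulVec_eq_zero_iff.mpr hdet
  have hext : S *ᵥ extend g x 0 = 0 := hrange _ fun a => by
    rw [S.mulVec_extend_zero hg]
    exact congrFun hSx a
  have hzero := hker _ hext fun i hi => extend_apply' _ _ _ fun ⟨a, ha⟩ => hi ⟨a, ha⟩
  exact hx (funext fun a => by rw [← hg.extend_apply x 0 a, hzero, Pi.zero_apply, Pi.zero_apply])

def HasNonsingularMaximalMinors {k : ℕ} (P : Matrix (Fin k) ι K) : Prop :=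
  ∀ e : Fin k → ι, Injective e → (P.submatrix id e).det ≠ 0

namespace HasNonsingularMaximalMinors

variable {k : ℕ} {P : Matrix (Fin k) ι K}

theorem eq_zero_of_vecMul_eq_zero_on (hP : P.HasNonsingularMaximalMinors) {s : Finset ι}
    (hs : s.card = k) {c : Fin k → K} (hc : ∀ i ∈ s, (c ᵥ* P) i = 0) : c = 0 := by
  subst hs
  obtain ⟨e, he, hes⟩ := s.exists_injective_fin_range_eq
  by_contra hne
  exact hP e he (exists_vecMul_eq_zero_iff.mp
    ⟨c, hne, funext fun l => hc (e l) (Finset.mem_coe.mp (hes ▸ Set.mem_range_self l))⟩)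

variable [Fintype ι] {S : Matrix ι ι K}

theorem eq_zero_of_mulVec_eq_zero (hP : P.HasNonsingularMaximalMinors) {s : Finset ι}
    (hs : s.card = k) {y : ι → K} (hy : P *ᵥ y = 0) (hys : ∀ i ∉ s, y i = 0) : y = 0 := by
  subst hs
  obtain ⟨e, he, hes⟩ := s.exists_injective_fin_range_eq
  have hyext : extend e (y ∘ e) 0 = y := funext fun i => by
    by_cases hi : ∃ l, e l = i
    · obtain ⟨l, rfl⟩ := hi
      exact he.extend_apply _ _ l
    · have his : i ∉ s := fun his => hi (by rw [← Set.mem_range, hes]; exact his)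
      rw [extend_apply' _ _ _ hi, hys i his, Pi.zero_apply]
  have hye : y ∘ e = 0 := by
    by_contra hne
    refine hP e he (exists_mulVec_eq_zero_iff.mp ⟨y ∘ e, hne, ?_⟩)
    rw [← P.mulVec_extend_zero he, hyext, hy]
  rw [← hyext, hye]
  exact extend_const e 0

theorem vecMul_injective (hP : P.HasNonsingularMaximalMinors) (hk : k ≤ Fintype.card ι) :
    Injective fun c => c ᵥ* P := by
  obtain ⟨s, -, hs⟩ := (Finset.univ : Finset ι).exists_subset_card_eq hk
  refine (injective_iff_map_eq_zero P.vecMulLinear).mpr fun c hc => ?_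
  exact hP.eq_zero_of_vecMul_eq_zero_on hs fun i _ => congrFun hc i

theorem exists_vecMul_eq_of_mulVec_eq_zero (hP : P.HasNonsingularMaximalMinors)
    (hk : k ≤ Fintype.card ι) (hSP : S * Pᵀ = 0) (hrank : S.rank + k = Fintype.card ι)
    {x : ι → K} (hx : S *ᵥ x = 0) : ∃ c, c ᵥ* P = x := by
  have hle : LinearMap.range P.vecMulLinear ≤ LinearMap.ker S.mulVecLin := by
    rintro _ ⟨c, rfl⟩
    rw [LinearMap.mem_ker, mulVecLin_apply, vecMulLinear_apply, ← mulVec_transpose,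
      mulVec_mulVec, hSP, zero_mulVec]
  have hdim : Module.finrank K (LinearMap.range P.vecMulLinear) =
      Module.finrank K (LinearMap.ker S.mulVecLin) := by
    have hker := LinearMap.finrank_range_add_finrank_ker S.mulVecLin
    rw [LinearMap.finrank_range_of_inj (hP.vecMul_injective hk), Module.finrank_fin_fun]
    rw [Module.finrank_fintype_fun_eq_card] at hker
    change S.rank + _ = _ at hker
    omega
  show x ∈ LinearMap.range P.vecMulLinear
  rw [Submodule.eq_of_le_of_finrank_eq hle hdim]
  exact hx

theorem det_submatrix_ne_zero [DecidableEq ι] [Fintype m] [DecidableEq m]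
    (hP : P.HasNonsingularMaximalMinors) (hPS : P * S = 0) (hSP : S * Pᵀ = 0)
    (hrank : S.rank + k = Fintype.card ι) (hm : Fintype.card m = S.rank)
    {f g : m → ι} (hf : Injective f) (hg : Injective g) : (S.submatrix f g).det ≠ 0 := by
  have hcompl : ∀ {h : m → ι}, Injective h → (Finset.univ.image h)ᶜ.card = k := fun hh => by
    rw [Finset.card_compl, Finset.card_image_of_injective _ hh, Finset.card_univ]
    omega
  refine det_submatrix_ne_zero_of_ker_of_range hg (fun x hx hxg => ?_) fun x hxf => ?_
  · obtain ⟨c, rfl⟩ := hP.exists_vecMul_eq_of_mulVec_eq_zero (by omega) hSP hrank hx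
    have hc : c = 0 := hP.eq_zero_of_vecMul_eq_zero_on (hcompl hg) fun i hi =>
      hxg i fun hig => Finset.mem_compl.mp hi (by simpa using hig)
    rw [hc, zero_vecMul]
  · refine hP.eq_zero_of_mulVec_eq_zero (hcompl hf) (by rw [mulVec_mulVec, hPS, zero_mulVec])
      fun i hi => ?_
    obtain ⟨a, -, rfl⟩ := Finset.mem_image.mp (Finset.notMem_compl.mp hi)
    exact hxf a

end HasNonsingularMaximalMinors

end Matrix

section Framework

variable {n r : ℕ} {p : Fin n → EuclideanSpace ℝ (Fin r)}

theorem extConfig_mulVec_eq_zero_iff {w : Fin n → ℝ} :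
    extConfig p *ᵥ w = 0 ↔ ∑ j, w j = 0 ∧ ∑ j, w j • p j = 0 := by
  have hcoord : ∀ χ : Fin r, (extConfig p *ᵥ w) χ.castSucc = (∑ j, w j • p j) χ := fun χ => by
    simp [extConfig, mulVec, dotProduct, mul_comm]
  have hlast : (extConfig p *ᵥ w) (Fin.last r) = ∑ j, w j := by
    simp [extConfig, mulVec, dotProduct]
  rw [funext_iff, Fin.forall_fin_succ', hlast, and_comm]
  simp only [hcoord, Pi.zero_apply]
  exact and_congr_right' (by rw [← WithLp.ofLp_eq_zero, funext_iff]; rfl)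

theorem AffineIndependent.det_extConfig_ne_zero {q : Fin (r + 1) → EuclideanSpace ℝ (Fin r)}
    (hq : AffineIndependent ℝ q) : (extConfig q).det ≠ 0 := by
  intro hdet
  obtain ⟨w, hw, hqw⟩ := exists_mulVec_eq_zero_iff.mpr hdet
  obtain ⟨hsum, hcomb⟩ := extConfig_mulVec_eq_zero_iff.mp hqw
  exact hw (funext fun l => affineIndependent_iff.mp hq _ w hsum hcomb l (Finset.mem_univ l))

theorem InGeneralPosition.affineIndependent_comp (hgp : InGeneralPosition p)
    {e : Fin (r + 1) → Fin n} (he : Injective e) : AffineIndependent ℝ (p ∘ e) := by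
  have hcard : (Finset.univ.image e).card = r + 1 := by
    rw [Finset.card_image_of_injective _ he, Finset.card_fin]
  let emb : Fin (r + 1) ↪ Finset.univ.image e :=
    ⟨fun l => ⟨e l, Finset.mem_image_of_mem e (Finset.mem_univ l)⟩,
      fun _ _ h => he (congrArg Subtype.val h)⟩
  exact (hgp _ hcard).comp_embedding emb

theorem InGeneralPosition.hasNonsingularMaximalMinors_extConfig (hgp : InGeneralPosition p) :
    (extConfig p).HasNonsingularMaximalMinors := fun _ he =>
  (hgp.affineIndependent_comp he).det_extConfig_ne_zero

variable {G : SimpleGraph (Fin n)} {S : Matrix (Fin n) (Fin n) ℝ}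

theorem IsStressMatrix.transpose_eq (hS : IsStressMatrix G p S) : Sᵀ = S := by
  obtain ⟨ω, ⟨hsymm, -⟩, hadj, hnadj, -⟩ := hS
  ext i j
  rw [transpose_apply]
  by_cases hij : j = i
  · rw [hij]
  by_cases hG : G.Adj i j
  · rw [hadj i j hG, hadj j i hG.symm, hsymm]
  · rw [hnadj i j (Ne.symm hij) hG, hnadj j i hij fun h => hG h.symm]

theorem stressMatrix_mulVec_apply {ω : Fin n → Fin n → ℝ}
    (hadj : ∀ i j, G.Adj i j → S i j = -ω i j) (hnadj : ∀ i j, i ≠ j → ¬G.Adj i j → S i j = 0)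
    (hdiag : ∀ i, S i i = ∑ j ∈ Finset.univ.filter (G.Adj i), ω i j)
    (v : Fin n → ℝ) (i : Fin n) :
    (S *ᵥ v) i = ∑ j ∈ Finset.univ.filter (G.Adj i), ω i j * (v i - v j) := by
  have hsub : Finset.univ.filter (G.Adj i) ⊆ Finset.univ.erase i := fun j hj =>
    Finset.mem_erase.mpr ⟨(Finset.mem_filter.mp hj).2.ne', Finset.mem_univ j⟩
  have hoff : ∀ j ∈ Finset.univ.erase i, j ∉ Finset.univ.filter (G.Adj i) → S i j * v j = 0 :=
    fun j hj hjG => by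
      rw [hnadj i j (Finset.ne_of_mem_erase hj).symm fun h => hjG (by simpa using h), zero_mul]
  calc (S *ᵥ v) i = S i i * v i + ∑ j ∈ Finset.univ.erase i, S i j * v j :=
        (Finset.add_sum_erase _ _ (Finset.mem_univ i)).symm
    _ = S i i * v i + ∑ j ∈ Finset.univ.filter (G.Adj i), S i j * v j := by
        rw [Finset.sum_subset hsub hoff]
    _ = ∑ j ∈ Finset.univ.filter (G.Adj i), ω i j * (v i - v j) := by
        rw [hdiag, Finset.sum_mul, ← Finset.sum_add_distrib]
        refine Finset.sum_congr rfl fun j hj => ?_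
        rw [hadj i j (Finset.mem_filter.mp hj).2]
        ring

theorem IsStressMatrix.mul_transpose_extConfig (hS : IsStressMatrix G p S) :
    S * (extConfig p)ᵀ = 0 := by
  obtain ⟨ω, ⟨-, hequil⟩, hadj, hnadj, hdiag⟩ := hS
  ext i k
  change (S *ᵥ extConfig p k) i = 0
  rw [stressMatrix_mulVec_apply hadj hnadj hdiag]
  by_cases hk : (k : ℕ) < r
  · have := congrArg (fun x : EuclideanSpace ℝ (Fin r) => x ⟨k, hk⟩) (hequil i)
    simpa [extConfig, hk, mul_sub] using this
  · simp [extConfig, hk]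

end Framework

theorem stmt12_stress_submatrices_nonsingular_general
    {n r : ℕ} (G : SimpleGraph (Fin n)) (p : Fin n → EuclideanSpace ℝ (Fin r))
    (hgp : InGeneralPosition p)
    (hr : 1 ≤ n - r - 1)
    (S : Matrix (Fin n) (Fin n) ℝ) (hS : IsStressMatrix G p S)
    (hrank : S.rank = n - r - 1) :
    ∀ f g : Fin (n - r - 1) → Fin n, Function.Injective f → Function.Injective g →
      (S.submatrix f g).det ≠ 0 := by
  intro f g hf hg
  have hSP : S * (extConfig p)ᵀ = 0 := hS.mul_transpose_extConfig
  have hPS : extConfig p * S = 0 := by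
    simpa [hS.transpose_eq] using congrArg transpose hSP
  exact hgp.hasNonsingularMaximalMinors_extConfig.det_submatrix_ne_zero hPS hSP
    (by rw [hrank, Fintype.card_fin]; omega) (by rw [hrank, Fintype.card_fin]) hf hg

/-- If `G(p)` is a bar framework on `n` vertices in general position in
`ℝ^r` with `r̄ = n - r - 1 ≥ 1` and `S` is a stress matrix of `G(p)` of rank `r̄`, then
every `r̄ × r̄` submatrix of `S` (rows indexed by a set `α` of size `r̄`, columns by a
set `β` of size `r̄`) is nonsingular. -/
theorem stmt12_stress_submatrices_nonsingular
    {n r : ℕ} (G : SimpleGraph (Fin n)) (p : Fin n → EuclideanSpace ℝ (Fin r))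
    (hconn : G.Connected) (hspan : AffinelySpans p) (hgp : InGeneralPosition p)
    (hr : 1 ≤ n - r - 1)
    (S : Matrix (Fin n) (Fin n) ℝ) (hS : IsStressMatrix G p S)
    (hrank : S.rank = n - r - 1) :
    ∀ f g : Fin (n - r - 1) → Fin n, Function.Injective f → Function.Injective g →
      (S.submatrix f g).det ≠ 0 :=
  stmt12_stress_submatrices_nonsingular_general G p hgp hr S hS hrank

end
end

section
/- Let G(p) be a bar framework on n vertices in general position in R^r whose graph G is (r+1)-vertex connected with 1,2,...,n a perfect elimination ordering of G, and let N̂(j) = {i : i > j and (i,j) ∈ E(G)}. Then for each j = 1,...,n−r−1 the system of equations (p^j;1) + Σ_{i∈N̂(j)} x_ij (p^i;1) = 0 (in the unknowns x_ij, i ∈ N̂(j), where (p^i;1) denotes the vector in R^{r+1} obtained by appending 1 to p^i) has a solution. -/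
open Matrix
open scoped Classical

noncomputable section

/-!
A vertex `j` with `j + r + 1 < n` has at least `r + 1` later neighbours. Otherwise enlarge
`N̂(j)` to an `r`-set `X` avoiding `j`; then `G - X` is connected and contains a vertex after
`j`. In a graph with a perfect elimination ordering a walk can be shortened by bypassing its
smallest vertex (whose two walk-neighbours come later, hence are equal or adjacent) until no
vertex precedes both endpoints; the second vertex of such a walk in `G - X` from `j` to a
later vertex is a later neighbour of `j` outside `X ⊇ N̂(j)`, a contradiction.
By general position any `r + 1` of the vectors `(pⁱ;1)` are linearly independent, so they
span `ℝ^(r+1)` and `-(pʲ;1)` is a combination of the `(pⁱ;1)` with `i ∈ N̂(j)`.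
-/

namespace SimpleGraph.Walk

variable {V : Type*} {G : SimpleGraph V}

theorem exists_split_at_mem_support [DecidableEq V] {a b v : V} (w : G.Walk a b)
    (hv : v ∈ w.support) (hva : v ≠ a) (hvb : v ≠ b) :
    ∃ (x y : V) (w₁ : G.Walk a x) (w₂ : G.Walk y b), G.Adj x v ∧ G.Adj v y ∧
      w₁.length + w₂.length + 2 = w.length ∧
      w₁.support ⊆ w.support ∧ w₂.support ⊆ w.support := by
  have hu₁ : ¬ (w.takeUntil v hv).Nil := fun h => hva h.eq.symm
  have hu₂ : ¬ (w.dropUntil v hv).Nil := fun h => hvb h.eq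
  refine ⟨_, _, (w.takeUntil v hv).dropLast, (w.dropUntil v hv).tail,
    adj_penultimate hu₁, adj_snd hu₂, ?_, ?_, ?_⟩
  · have hlen := congrArg length (w.take_spec hv)
    rw [length_append] at hlen
    have := length_dropLast_add_one hu₁
    have := length_tail_add_one hu₂
    omega
  · rw [support_dropLast hu₁]
    exact List.Subset.trans (List.dropLast_subset _) (w.support_takeUntil_subset_support hv)
  · rw [support_tail_of_not_nil _ hu₂]
    exact List.Subset.trans (List.tail_subset _) (w.support_dropUntil_subset_support hv)

end SimpleGraph.Walk

open SimpleGraph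

/-- The paper's `N̂(j)`. -/
def laterNeighborFinset {n : ℕ} (G : SimpleGraph (Fin n)) (j : Fin n) : Finset (Fin n) :=
  Finset.univ.filter fun i => j < i ∧ G.Adj i j

namespace IsNatPEO

variable {n : ℕ} {G : SimpleGraph (Fin n)}

theorem exists_walk_support_subset_min_le (hpeo : IsNatPEO G) {a b : Fin n}
    (w : G.Walk a b) :
    ∃ w' : G.Walk a b, w'.support ⊆ w.support ∧ ∀ v ∈ w'.support, min a b ≤ v := by
  induction hk : w.length using Nat.strong_induction_on generalizing w with
  | _ k ih =>
    by_cases hge : ∀ v ∈ w.support, min a b ≤ v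
    · exact ⟨w, List.Subset.refl _, hge⟩
    push Not at hge
    obtain ⟨u, hu, hua⟩ := hge
    obtain ⟨v, hv, hvmin⟩ := w.support.toFinset.exists_min_image id ⟨a, by simp⟩
    rw [List.mem_toFinset] at hv
    replace hvmin : ∀ u ∈ w.support, v ≤ u := fun u hu => hvmin u (List.mem_toFinset.2 hu)
    have hvab : v < min a b := (hvmin u hu).trans_lt hua
    obtain ⟨x, y, w₁, w₂, hxv, hvy, hlen, hw₁, hw₂⟩ :=
      w.exists_split_at_mem_support hv (lt_min_iff.1 hvab).1.ne (lt_min_iff.1 hvab).2.ne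
    obtain ⟨w', hlen', hw'⟩ :
      ∃ w' : G.Walk a b, w'.length < k ∧ w'.support ⊆ w.support := by
      by_cases hxy : x = y
      · subst hxy
        refine ⟨w₁.append w₂, by rw [Walk.length_append]; omega, ?_⟩
        rw [Walk.support_append]
        exact List.append_subset.2 ⟨hw₁, List.Subset.trans (List.tail_subset _) hw₂⟩
      · have hx : v < x := lt_of_le_of_ne (hvmin x (hw₁ w₁.end_mem_support)) hxv.ne'
        have hy : v < y := lt_of_le_of_ne (hvmin y (hw₂ w₂.start_mem_support)) hvy.ne
        have hxy' : G.Adj x y := hpeo v x y hx hy hxy hxv.symm hvy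
        refine ⟨w₁.append (.cons hxy' w₂), ?_, ?_⟩
        · rw [Walk.length_append, Walk.length_cons]
          omega
        · rw [Walk.support_append, Walk.support_cons, List.tail_cons]
          exact List.append_subset.2 ⟨hw₁, hw₂⟩
    obtain ⟨w'', hw'', hmin⟩ := ih _ hlen' w' rfl
    exact ⟨w'', List.Subset.trans hw'' hw', hmin⟩

theorem exists_adj_gt_mem (hpeo : IsNatPEO G) {s : Set (Fin n)}
    (hs : (G.induce s).Preconnected) {j m : Fin n} (hj : j ∈ s) (hm : m ∈ s) (hjm : j < m) :
    ∃ c ∈ s, j < c ∧ G.Adj j c := by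
  obtain ⟨w⟩ := hs ⟨j, hj⟩ ⟨m, hm⟩
  obtain ⟨w', hw', hge⟩ :=
    hpeo.exists_walk_support_subset_min_le (a := j) (b := m)
      (w.map (Embedding.induce s).toHom)
  have hnil : ¬ w'.Nil := fun h => hjm.ne h.eq
  have hsnd : w'.snd ∈ w'.support := List.mem_of_mem_tail (w'.snd_mem_tail_support hnil)
  refine ⟨w'.snd, ?_, ?_, w'.adj_snd hnil⟩
  · obtain ⟨u, -, hu⟩ := List.mem_map.1 (Walk.support_map _ w ▸ hw' hsnd)
    exact hu ▸ u.2
  · have hjc := hge _ hsnd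
    rw [min_eq_left hjm.le] at hjc
    exact lt_of_le_of_ne hjc (w'.adj_snd hnil).ne

theorem le_card_laterNeighborFinset (hpeo : IsNatPEO G) {r : ℕ}
    (hcon : IsKVertexConnected (r + 1) G) {j : Fin n} (hj : (j : ℕ) < n - r - 1) :
    r + 1 ≤ (laterNeighborFinset G j).card := by
  have hIoi : r + 1 ≤ (Finset.Ioi j).card := by rw [Fin.card_Ioi]; omega
  rcases hcon with ⟨-, rfl⟩ | ⟨-, hX⟩
  · refine hIoi.trans (Finset.card_le_card fun i hi => ?_)
    rw [Finset.mem_Ioi] at hi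
    simp [laterNeighborFinset, hi, hi.ne']
  by_contra! hcard
  have hsub : laterNeighborFinset G j ⊆ Finset.univ.erase j := fun i hi => by
    simp only [laterNeighborFinset, Finset.mem_filter] at hi
    simp [hi.2.1.ne']
  obtain ⟨X, hNX, hXj, hXcard⟩ :=
    Finset.exists_subsuperset_card_eq hsub (by omega : _ ≤ r) (by simp; omega)
  obtain ⟨m, hm, hmX⟩ :=
    Finset.exists_mem_notMem_of_card_lt_card (s := X) (by omega : _ < (Finset.Ioi j).card)
  obtain ⟨c, hcX, hjc, hadj⟩ := hpeo.exists_adj_gt_mem (hX X (by omega)).preconnected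
    (j := j) (m := m) (fun h => by simpa using hXj h) hmX (Finset.mem_Ioi.1 hm)
  exact hcX (hNX (by simp [laterNeighborFinset, hjc, hadj.symm]))

end IsNatPEO

theorem linearIndependent_extConfig_col {n r : ℕ}
    {p : Fin n → EuclideanSpace ℝ (Fin r)} {s : Finset (Fin n)}
    (hs : AffineIndependent ℝ (fun i : s => p i)) :
    LinearIndependent ℝ (fun i : s => (extConfig p).col i) := by
  rw [Fintype.linearIndependent_iff]
  intro c hc
  have hsum : ∑ i, c i = 0 := by simpa [extConfig] using congrFun hc (Fin.last r)
  have hcomb : ∑ i, c i • p i = 0 := by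
    ext b
    simpa [extConfig] using congrFun hc (Fin.castSucc b)
  exact fun i => hs.eq_zero_of_sum_eq_zero hsum hcomb i (Finset.mem_univ i)

theorem span_extConfig_col_image_eq_top {n r : ℕ}
    {p : Fin n → EuclideanSpace ℝ (Fin r)} (hgp : InGeneralPosition p) {F : Finset (Fin n)}
    (hF : r + 1 ≤ F.card) : Submodule.span ℝ ((extConfig p).col '' F) = ⊤ := by
  obtain ⟨T, hTF, hT⟩ := Finset.exists_subset_card_eq hF
  refine eq_top_mono (Submodule.span_mono (Set.image_mono hTF)) ?_
  rw [Set.image_eq_range]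
  exact (linearIndependent_extConfig_col (hgp T hT)).span_eq_top_of_card_eq_finrank'
    (by simp [hT])

theorem Submodule.exists_sum_smul_eq_of_span_image_eq_top {ι R M : Type*} [Semiring R]
    [AddCommMonoid M] [Module R M] {v : ι → M} {s : Finset ι}
    (hs : Submodule.span R (v '' s) = ⊤) (y : M) :
    ∃ c : ι → R, ∑ i ∈ s, c i • v i = y := by
  obtain ⟨l, hl, rfl⟩ :=
    (Finsupp.mem_span_image_iff_linearCombination R).1 (hs ▸ mem_top : y ∈ _)
  exact ⟨l, (Finsupp.linearCombination_apply_of_mem_supported R hl).symm⟩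

theorem stmt15_system_solvable_general
    {n r : ℕ} (G : SimpleGraph (Fin n)) (p : Fin n → EuclideanSpace ℝ (Fin r))
    (hgp : InGeneralPosition p)
    (hpeo : IsNatPEO G) (hcon : IsKVertexConnected (r + 1) G) :
    ∀ j : Fin n, (j : ℕ) < n - r - 1 →
      ∃ x : Fin n → ℝ, ∀ a : Fin (r + 1),
        extConfig p a j +
          ∑ i ∈ Finset.univ.filter (fun i : Fin n => j < i ∧ G.Adj i j),
            x i * extConfig p a i = 0 := by
  intro j hj
  have hspan :=
    span_extConfig_col_image_eq_top hgp (hpeo.le_card_laterNeighborFinset hcon hj)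
  obtain ⟨x, hx⟩ :=
    Submodule.exists_sum_smul_eq_of_span_image_eq_top hspan (-(extConfig p).col j)
  refine ⟨x, fun a => ?_⟩
  have hxa := congrFun hx a
  simp only [Finset.sum_apply, Pi.smul_apply, Pi.neg_apply, col_apply, smul_eq_mul] at hxa
  rw [laterNeighborFinset] at hxa
  linarith

/-- For a bar framework `G(p)` on `n` vertices in general position in
`ℝ^r` with `G` `(r+1)`-vertex connected and `1, ..., n` a PEO of `G`, for each
`j = 1, ..., n - r - 1` the system `(pʲ;1) + ∑_{i ∈ N̂(j)} x_ij (pⁱ;1) = 0` has a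
solution, where `N̂(j) = {i : i > j and (i,j) ∈ E(G)}`. -/
theorem stmt15_system_solvable
    {n r : ℕ} (G : SimpleGraph (Fin n)) (p : Fin n → EuclideanSpace ℝ (Fin r))
    (hconn : G.Connected) (hspan : AffinelySpans p) (hgp : InGeneralPosition p)
    (hpeo : IsNatPEO G) (hcon : IsKVertexConnected (r + 1) G) :
    ∀ j : Fin n, (j : ℕ) < n - r - 1 →
      ∃ x : Fin n → ℝ, ∀ a : Fin (r + 1),
        extConfig p a j +
          ∑ i ∈ Finset.univ.filter (fun i : Fin n => j < i ∧ G.Adj i j),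
            x i * extConfig p a i = 0 :=
  stmt15_system_solvable_general G p hgp hpeo hcon

end
end

section
/- Let G be a chordal graph on n vertices with 1,2,...,n a perfect elimination ordering of G, and let A be an n×n real symmetric matrix of rank k with generic rank profile such that a_ij = 0 for all i ≠ j with (i,j) ∉ E(G). Define A^(0) = A and, for t = 1,...,k, let A^(t) be the matrix obtained from A^(t−1) by one step of Gauss elimination with pivot a^(t−1)_tt, i.e., a^(t)_ij = a^(t−1)_ij if i < t; a^(t)_ij = a^(t−1)_ij / a^(t−1)_tt if i = t; a^(t)_ij = 0 if i > t and j ≤ t; and a^(t)_ij = a^(t−1)_ij − a^(t−1)_it a^(t−1)_tj / a^(t−1)_tt if i > t and j > t (these pivots a^(t−1)_tt are nonzero since A has generic rank profile). Then for every t = 1,...,k and for all i ≠ j with (i,j) ∉ E(G), one has a^(t)_ij = 0. -/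
open Matrix
open scoped Classical

noncomputable section

def SupportedOnGraph {V R : Type*} [Zero R] (G : SimpleGraph V) (B : Matrix V V R) : Prop :=
  ∀ i j, i ≠ j → ¬ G.Adj i j → B i j = 0

section

variable {n : ℕ} {G : SimpleGraph (Fin n)}

/-- No fill-in at a pivot `p` preceding `i` and `j`: if `B i p` and `B p j` were both
nonzero, then `p` would be adjacent to both, and the PEO would make `i, j` adjacent. -/
theorem SupportedOnGraph.mul_eq_zero_of_isNatPEO {R : Type*} [MulZeroClass R]
    {B : Matrix (Fin n) (Fin n) R} (hB : SupportedOnGraph G B) (hpeo : IsNatPEO G)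
    {p i j : Fin n} (hi : p < i) (hj : p < j) (hij : i ≠ j) (hadj : ¬ G.Adj i j) :
    B i p * B p j = 0 := by
  by_cases hpi : G.Adj p i
  · exact mul_eq_zero_of_right _ <|
      hB p j hj.ne fun hpj => hadj (hpeo p i j hi hj hij hpi hpj)
  · exact mul_eq_zero_of_left (hB i p hi.ne' fun hip => hpi hip.symm) _

theorem supportedOnGraph_gaussElim {A : Matrix (Fin n) (Fin n) ℝ}
    (hA : SupportedOnGraph G A) (hpeo : IsNatPEO G) (t : ℕ) :
    SupportedOnGraph G (gaussElim A t) := by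
  induction t with
  | zero => exact hA
  | succ t ih =>
    intro i j hij hadj
    have hB := ih i j hij hadj
    by_cases ht : t < n
    swap
    · simpa only [gaussElim, ht, ↓reduceDIte] using hB
    simp only [gaussElim, ht, ↓reduceDIte]
    split_ifs with hit hit' hjt
    · exact hB
    · simp [hB]
    · rfl
    · have hfill := ih.mul_eq_zero_of_isNatPEO hpeo (p := ⟨t, ht⟩)
        (Fin.mk_lt_of_lt_val (by omega)) (Fin.mk_lt_of_lt_val (by omega)) hij hadj
      simp [hB, hfill]

end

theorem stmt16_gauss_elimination_preserves_sparsity_general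
    {n k : ℕ} (G : SimpleGraph (Fin n)) (hpeo : IsNatPEO G)
    (A : Matrix (Fin n) (Fin n) ℝ)
    (hA : ∀ i j : Fin n, i ≠ j → ¬ G.Adj i j → A i j = 0) :
    ∀ t : ℕ, 1 ≤ t → t ≤ k →
      ∀ i j : Fin n, i ≠ j → ¬ G.Adj i j → gaussElim A t i j = 0 :=
  fun t _ _ => supportedOnGraph_gaussElim hA hpeo t

/-- Let `G` be chordal on `n` vertices with `1, ..., n` a PEO, and let `A`
be a symmetric matrix of rank `k` with generic rank profile whose off-diagonal entries
vanish on non-edges of `G`. Then after each of the first `k` steps of Gauss elimination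
the off-diagonal entries on non-edges of `G` still vanish. -/
theorem stmt16_gauss_elimination_preserves_sparsity
    {n k : ℕ} (G : SimpleGraph (Fin n)) (hchord : IsChordal G) (hpeo : IsNatPEO G)
    (A : Matrix (Fin n) (Fin n) ℝ) (hsymm : A.IsSymm) (hrank : A.rank = k)
    (hgrp : HasGenericRankProfile A k)
    (hA : ∀ i j : Fin n, i ≠ j → ¬ G.Adj i j → A i j = 0) :
    ∀ t : ℕ, 1 ≤ t → t ≤ k →
      ∀ i j : Fin n, i ≠ j → ¬ G.Adj i j → gaussElim A t i j = 0 :=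
  stmt16_gauss_elimination_preserves_sparsity_general G hpeo A hA

end
end

section
/- Let G(p) be a bar framework on n vertices in R^r with r̄ = n−r−1 ≥ 1, and let S be a stress matrix of G(p) of rank r̄ with generic rank profile. Write S = [S_1; S_2] where S_1 consists of the first r̄ rows of S and S_2 consists of the last r+1 rows. Then the rows of S_1 are linearly independent and S_1^T is a Gale matrix of G(p); in particular, the columns of S span the null space of the extended configuration matrix 𝒫 of G(p). -/
open Matrix
open scoped Classical

noncomputable section

/-! Every row of a stress matrix lies in the null space of `𝒫` (equilibrium plus zero row
sums), and this null space has dimension `r̄` because `𝒫` has full row rank when `p` affinely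
spans. The nonzero leading `r̄ × r̄` minor makes the first `r̄` rows independent, so they form a
basis of the null space; by symmetry the columns of `S` are its rows and span the same space. -/

section LinearAlgebra

variable {K : Type*} [Field K]

theorem Matrix.linearIndependent_rows_of_det_submatrix_ne_zero {m l k : Type*} [Fintype k]
    [DecidableEq k] {A : Matrix m l K} {e : k → m} {f : k → l}
    (hdet : (A.submatrix e f).det ≠ 0) : LinearIndependent K fun t => A (e t) := by
  have hsub : LinearIndependent K (A.submatrix e f).row :=
    linearIndependent_rows_iff_isUnit.2 ((isUnit_iff_isUnit_det _).2 hdet.isUnit)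
  exact hsub.of_comp (LinearMap.funLeft K K f)

theorem LinearIndependent.span_eq_of_forall_mem_of_card_eq_finrank {ι V : Type*} [Fintype ι]
    [AddCommGroup V] [Module K V] {W : Submodule K V} [FiniteDimensional K W] {v : ι → V}
    (hv : LinearIndependent K v) (hmem : ∀ i, v i ∈ W)
    (hcard : Fintype.card ι = Module.finrank K W) : Submodule.span K (Set.range v) = W :=
  Submodule.eq_of_le_of_finrank_eq (Submodule.span_le.2 (Set.range_subset_iff.2 hmem))
    (by rw [finrank_span_eq_card hv, hcard])

end LinearAlgebra

section StressMatrix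

variable {n r : ℕ}

theorem IsStressMatrix.isSymm {G : SimpleGraph (Fin n)} {p : Fin n → EuclideanSpace ℝ (Fin r)}
    {S : Matrix (Fin n) (Fin n) ℝ} (hS : IsStressMatrix G p S) : S.IsSymm := by
  obtain ⟨ω, ⟨hωsymm, -⟩, hadj, hnadj, -⟩ := hS
  ext i j
  by_cases hij : i = j
  · rw [hij, transpose_apply]
  by_cases hG : G.Adj j i
  · rw [transpose_apply, hadj _ _ hG, hadj _ _ hG.symm, hωsymm]
  · rw [transpose_apply, hnadj _ _ (Ne.symm hij) hG, hnadj _ _ hij fun h => hG h.symm]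

theorem stressMatrix_apply {G : SimpleGraph (Fin n)} {S : Matrix (Fin n) (Fin n) ℝ}
    {ω : Fin n → Fin n → ℝ} (hadj : ∀ i j : Fin n, G.Adj i j → S i j = -ω i j)
    (hnadj : ∀ i j : Fin n, i ≠ j → ¬G.Adj i j → S i j = 0)
    (hdiag : ∀ i : Fin n, S i i = ∑ j ∈ Finset.univ.filter (fun j => G.Adj i j), ω i j)
    (i j : Fin n) :
    S i j = (if i = j then ∑ k ∈ Finset.univ.filter (fun k => G.Adj i k), ω i k else 0) -
      if G.Adj i j then ω i j else 0 := by
  by_cases hij : i = j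
  · subst hij; simp [hdiag]
  by_cases hG : G.Adj i j
  · simp [hij, hG, hadj _ _ hG]
  · simp [hij, hG, hnadj _ _ hij hG]

theorem stressMatrix_row_dotProduct {G : SimpleGraph (Fin n)} {S : Matrix (Fin n) (Fin n) ℝ}
    {ω : Fin n → Fin n → ℝ} (hadj : ∀ i j : Fin n, G.Adj i j → S i j = -ω i j)
    (hnadj : ∀ i j : Fin n, i ≠ j → ¬G.Adj i j → S i j = 0)
    (hdiag : ∀ i : Fin n, S i i = ∑ j ∈ Finset.univ.filter (fun j => G.Adj i j), ω i j)
    (i : Fin n) (x : Fin n → ℝ) :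
    S i ⬝ᵥ x = ∑ j ∈ Finset.univ.filter (fun j => G.Adj i j), ω i j * (x i - x j) := by
  simp only [dotProduct, stressMatrix_apply hadj hnadj hdiag, sub_mul, ite_mul, zero_mul,
    Finset.sum_sub_distrib, Finset.sum_ite_eq, Finset.mem_univ, if_true, Finset.sum_mul,
    mul_sub, ← Finset.sum_filter]

theorem IsStressMatrix.extConfig_mulVec_row {G : SimpleGraph (Fin n)}
    {p : Fin n → EuclideanSpace ℝ (Fin r)} {S : Matrix (Fin n) (Fin n) ℝ}
    (hS : IsStressMatrix G p S) (i : Fin n) : extConfig p *ᵥ S i = 0 := by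
  obtain ⟨ω, ⟨-, hequil⟩, hadj, hnadj, hdiag⟩ := hS
  ext a
  rw [mulVec, dotProduct_comm, stressMatrix_row_dotProduct hadj hnadj hdiag, Pi.zero_apply]
  by_cases ha : (a : ℕ) < r
  · simpa [extConfig, ha, mul_sub] using congrArg (· ⟨a, ha⟩) (hequil i)
  · simp [extConfig, ha]

end StressMatrix

section ExtendedConfiguration

variable {n r : ℕ}

@[simp]
theorem extConfig_castSucc (p : Fin n → EuclideanSpace ℝ (Fin r)) (a : Fin r) (j : Fin n) :
    extConfig p a.castSucc j = p j a := by
  simp [extConfig]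

@[simp]
theorem extConfig_last (p : Fin n → EuclideanSpace ℝ (Fin r)) (j : Fin n) :
    extConfig p (Fin.last r) j = 1 := by
  simp [extConfig]

theorem AffinelySpans.linearIndependent_extConfig_row {p : Fin n → EuclideanSpace ℝ (Fin r)}
    (hspan : AffinelySpans p) : LinearIndependent ℝ (extConfig p).row := by
  rw [Fintype.linearIndependent_iff]
  intro c hc
  -- a row relation `c` is an affine function vanishing on the configuration, hence everywhere
  let φ : EuclideanSpace ℝ (Fin r) →ᵃ[ℝ] ℝ :=
    (∑ a, c a.castSucc • (EuclideanSpace.proj a).toLinearMap).toAffineMap +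
      AffineMap.const ℝ _ (c (Fin.last r))
  have hφ_apply (x : EuclideanSpace ℝ (Fin r)) :
      φ x = ∑ a, c a.castSucc * x a + c (Fin.last r) := by
    simp [φ]
  have hφ : φ = 0 := by
    refine AffineMap.ext_on hspan ?_
    rintro - ⟨j, rfl⟩
    simpa [hφ_apply, Fin.sum_univ_castSucc] using congrFun hc j
  have hlast : c (Fin.last r) = 0 := by simpa [hφ_apply] using congrArg (· 0) hφ
  refine Fin.lastCases hlast fun a => ?_
  simpa [hφ_apply, hlast] using congrArg (· (EuclideanSpace.single a 1)) hφ

theorem AffinelySpans.finrank_ker_extConfig {p : Fin n → EuclideanSpace ℝ (Fin r)}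
    (hspan : AffinelySpans p) :
    Module.finrank ℝ (LinearMap.ker (extConfig p).mulVecLin) = n - r - 1 := by
  have hrank : (extConfig p).rank = r + 1 := by
    simpa using hspan.linearIndependent_extConfig_row.rank_matrix
  have := LinearMap.finrank_range_add_finrank_ker (extConfig p).mulVecLin
  rw [← Matrix.rank, hrank, Module.finrank_fin_fun] at this
  omega

end ExtendedConfiguration

/-- Let `S` be a stress matrix of rank `r̄ = n - r - 1 ≥ 1` with generic
rank profile of a bar framework `G(p)` on `n` vertices in `ℝ^r`, and let `S₁` consist
of the first `r̄` rows of `S`. Then the rows of `S₁` are linearly independent, `S₁ᵀ`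
is a Gale matrix of `G(p)`, and the columns of `S` span the null space of the extended
configuration matrix `𝒫` of `G(p)`. -/
theorem stmt18_top_rows_give_gale_matrix
    {n r : ℕ} (G : SimpleGraph (Fin n)) (p : Fin n → EuclideanSpace ℝ (Fin r))
    (hspan : AffinelySpans p) (hr : 1 ≤ n - r - 1)
    (S : Matrix (Fin n) (Fin n) ℝ) (hS : IsStressMatrix G p S)
    (hgrp : HasGenericRankProfile S (n - r - 1)) :
    LinearIndependent ℝ
        (fun t : Fin (n - r - 1) => S (Fin.castLE (by omega) t)) ∧
    IsGaleMatrix p (S.submatrix (Fin.castLE (by omega : n - r - 1 ≤ n)) id)ᵀ ∧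
    Submodule.span ℝ (Set.range fun j : Fin n => Sᵀ j) =
      LinearMap.ker (Matrix.mulVecLin (extConfig p)) := by
  have hle : n - r - 1 ≤ n := by omega
  have hind : LinearIndependent ℝ fun t => S (Fin.castLE hle t) :=
    linearIndependent_rows_of_det_submatrix_ne_zero (hgrp _ hr le_rfl hle)
  have hker (i : Fin n) : S i ∈ LinearMap.ker (extConfig p).mulVecLin :=
    hS.extConfig_mulVec_row i
  have htop_rows : Submodule.span ℝ (Set.range fun t => S (Fin.castLE hle t)) =
      LinearMap.ker (extConfig p).mulVecLin :=
    hind.span_eq_of_forall_mem_of_card_eq_finrank (fun t => hker _)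
      (by rw [hspan.finrank_ker_extConfig, Fintype.card_fin])
  refine ⟨hind, ⟨?_, hind, fun x hx => htop_rows ▸ hx⟩, ?_⟩
  · ext a t
    simpa [Matrix.mul_apply, mulVec, dotProduct] using
      congrFun (hS.extConfig_mulVec_row (Fin.castLE hle t)) a
  · rw [hS.isSymm.eq]
    refine le_antisymm (Submodule.span_le.2 (Set.range_subset_iff.2 hker)) ?_
    exact htop_rows ▸ Submodule.span_mono (Set.range_comp_subset_range _ _)

end
end
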